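/- arXiv:2307.13627 — 2 statements merged into one kernel-verified Lean document; each statement's English description precedes it below -/
import Mathlib

section
/- Let X be a real n×k matrix with X'X symmetric positive definite, let σ be a permutation of {1, …, k}, and let Q_σ be the associated k×k permutation matrix, so that XQ_σ is the matrix whose columns are those of X permuted by σ. Then (XQ_σ)'(XQ_σ) is symmetric positive definite and (XQ_σ)((XQ_σ)'(XQ_σ))^{−1/2} = (X(X'X)^{−1/2})Q_σ; that is, the Gram–normalization map X ↦ X(X'X)^{−1/2} is equivariant under column permutations. -/
/-!
Permuting the columns of `X` is right multiplication by a permutation matrix `Q`, which is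
orthogonal, so the Gram matrix becomes `Qᵀ (XᵀX) Q`. Positive square roots commute with
orthogonal conjugation: `Qᵀ √A Q` is positive semidefinite and squares to `Qᵀ A Q`. Inverting gives
`(Qᵀ A Q)^{-1/2} = Qᵀ A^{-1/2} Q`, and the factor `Q Qᵀ = 1` cancels in `X Q · Qᵀ A^{-1/2} Q`.
-/

open Matrix

open scoped Classical in
/-- `A ↦ A^{-1/2}`: the inverse of the unique positive semidefinite square root of `A`
(junk value `0` for non-PSD `A`). -/
noncomputable def invSqrt {k : ℕ} (A : Matrix (Fin k) (Fin k) ℝ) : Matrix (Fin k) (Fin k) ℝ :=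
  if h : A.PosSemidef then
    (h.1.eigenvectorUnitary.1 * diagonal ((RCLike.ofReal : ℝ → ℝ) ∘ (√·) ∘ h.1.eigenvalues) *
      (star h.1.eigenvectorUnitary : Matrix (Fin k) (Fin k) ℝ))⁻¹ else 0

open scoped MatrixOrder

namespace CFC

variable {A : Type*} [PartialOrder A] [Ring A] [TopologicalSpace A] [StarRing A]
  [Module ℝ A] [SMulCommClass ℝ A A] [IsScalarTower ℝ A A] [StarOrderedRing A]
  [NonUnitalContinuousFunctionalCalculus ℝ A IsSelfAdjoint] [NonnegSpectrumClass ℝ A]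
  [IsSemitopologicalRing A] [T2Space A]

lemma sqrt_star_left_conjugate {a u : A} (hu : u ∈ unitary A) (ha : 0 ≤ a) :
    sqrt (star u * a * u) = star u * sqrt a * u := by
  refine sqrt_unique ?_ (star_left_conjugate_nonneg (sqrt_nonneg a) u)
  calc star u * sqrt a * u * (star u * sqrt a * u)
      = star u * sqrt a * (u * star u) * sqrt a * u := by noncomm_ring
    _ = star u * a * u := by
      rw [Unitary.mul_star_self_of_mem hu, mul_one, mul_assoc (star u), sqrt_mul_sqrt_self a ha]

end CFC

namespace Matrix

lemma permMatrix_mem_unitary {n R : Type*} [DecidableEq n] [Fintype n] [Semiring R] [StarRing R]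
    (σ : Equiv.Perm n) : σ.permMatrix R ∈ unitary (Matrix n n R) := by
  simp [Unitary.mem_iff, star_eq_conjTranspose, ← permMatrix_mul]

lemma of_ite_eq_apply_eq_permMatrix_inv {n R : Type*} [DecidableEq n] [Zero R] [One R]
    (σ : Equiv.Perm n) : (of fun i j => if i = σ j then (1 : R) else 0) = σ⁻¹.permMatrix R := by
  ext i j
  simp [PEquiv.toMatrix_apply, Equiv.symm_apply_eq, eq_comm (a := i)]

end Matrix

lemma invSqrt_eq_inv_sqrt {k : ℕ} {A : Matrix (Fin k) (Fin k) ℝ} (h : A.PosSemidef) :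
    invSqrt A = (CFC.sqrt A)⁻¹ := by
  rw [invSqrt, dif_pos h, CFC.sqrt_eq_cfc, cfc_nnreal_eq_real _ A, h.1.cfc_eq]
  congr 1
  simp only [IsHermitian.cfc, Unitary.conjStarAlgAut_apply]
  congr 3
  funext x
  simp [Real.coe_toNNReal', max_eq_left (h.eigenvalues_nonneg x)]

lemma invSqrt_star_left_conjugate {k : ℕ} {A U : Matrix (Fin k) (Fin k) ℝ}
    (hU : U ∈ unitary (Matrix (Fin k) (Fin k) ℝ)) (hA : A.PosSemidef) :
    invSqrt (star U * A * U) = star U * invSqrt A * U := by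
  have hUinv : U⁻¹ = star U := inv_eq_left_inv (Unitary.star_mul_self_of_mem hU)
  have hUstarinv : (star U)⁻¹ = U := inv_eq_left_inv (Unitary.mul_star_self_of_mem hU)
  have hconj : (star U * A * U).PosSemidef := hA.conjTranspose_mul_mul_same U
  rw [invSqrt_eq_inv_sqrt hconj, invSqrt_eq_inv_sqrt hA,
    CFC.sqrt_star_left_conjugate hU hA.nonneg, Matrix.mul_inv_rev, Matrix.mul_inv_rev, hUinv,
    hUstarinv, Matrix.mul_assoc]

/-- Let `X` be a real `n×k` matrix with `X'X` symmetric positive definite,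
`σ` a permutation of `{1, …, k}`, and `Q_σ` the associated permutation matrix, so that
`X Q_σ` has the columns of `X` permuted by `σ`. Then `(X Q_σ)'(X Q_σ)` is symmetric positive
definite and `(X Q_σ)((X Q_σ)'(X Q_σ))^{-1/2} = (X (X'X)^{-1/2}) Q_σ`: Gram–normalization
is equivariant under column permutations. -/
theorem stmt_6 {n k : ℕ} (X : Matrix (Fin n) (Fin k) ℝ) (h : (Xᵀ * X).PosDef)
    (σ : Equiv.Perm (Fin k)) (Q : Matrix (Fin k) (Fin k) ℝ)
    (hQ : Q = Matrix.of fun i j => if i = σ j then (1 : ℝ) else 0) :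
    ((X * Q)ᵀ * (X * Q)).PosDef ∧
      (X * Q) * invSqrt ((X * Q)ᵀ * (X * Q)) = X * invSqrt (Xᵀ * X) * Q := by
  have hQU : Q ∈ unitary (Matrix (Fin k) (Fin k) ℝ) := by
    rw [hQ, of_ite_eq_apply_eq_permMatrix_inv]
    exact permMatrix_mem_unitary σ⁻¹
  have hGram : (X * Q)ᵀ * (X * Q) = star Q * (Xᵀ * X) * Q := by
    rw [transpose_mul, star_eq_conjTranspose, conjTranspose_eq_transpose_of_trivial]
    simp only [Matrix.mul_assoc]
  rw [hGram]
  refine ⟨(IsUnit.posDef_star_left_conjugate_iff (Unitary.isUnit_coe (U := ⟨Q, hQU⟩))).2 h, ?_⟩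
  rw [invSqrt_star_left_conjugate hQU h.posSemidef]
  calc X * Q * (star Q * invSqrt (Xᵀ * X) * Q)
      = X * (Q * star Q) * invSqrt (Xᵀ * X) * Q := by simp only [Matrix.mul_assoc]
    _ = X * invSqrt (Xᵀ * X) * Q := by rw [Unitary.mul_star_self_of_mem hQU, Matrix.mul_one]
end

section
/- Let Z be a real n×m matrix, U = [u_1, …, u_k], V = [v_1, …, v_k], D = diag(d_1, …, d_k), Σ a symmetric positive definite n×n matrix, and E = Z − U_{−i}D_{−i}V_{−i}'. Suppose v_i'v_i = 1 and u_i = Nũ, where N is a real n×(n−k+1) matrix with N'N = I_{n−k+1} and ũ ∈ ℝ^{n−k+1}, and let Ω be a symmetric positive definite n×n matrix with N'ΩN invertible. Then the sum of the negative log-likelihood exponent and the prior exponent is, as a function of ũ, an exact quadratic form: −½·tr[(Z − UDV')'Σ⁻¹(Z − UDV')] − ½·d_i²·ũ'(N'ΩN)⁻¹ũ = −½(ũ'S ũ − 2 m'ũ) − ½·tr[E'Σ⁻¹E], where S = d_i²(N'ΩN)⁻¹ + d_i² N'Σ⁻¹N and m = d_i N'Σ⁻¹E v_i; hence the full conditional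 density of ũ is proportional, on the unit sphere, to the Gaussian kernel exp{−½(ũ − S⁻¹m)'S(ũ − S⁻¹m)}. -/
/-!
Splitting off the `i`-th rank-one term, `Z − UDV' = E − d_i u_i v_i'`, and expanding the trace
with `Σ⁻¹` symmetric and `v_i'v_i = 1` leaves `tr[E'Σ⁻¹E] − 2 d_i u_i'Σ⁻¹E v_i + d_i² u_i'Σ⁻¹u_i`;
substituting `u_i = Nũ` gives the quadratic form in `ũ`. Since `S = d_i² (N'ΩN)⁻¹ + d_i² N'Σ⁻¹N`
is symmetric and `S (S⁻¹ m) = m`, completing the square leaves only a constant in front of the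
Gaussian kernel.
-/

open Matrix

namespace Matrix

variable {R : Type*} [CommRing R] {l m n : Type*}

theorem mul_diagonal_mul_transpose_eq_succAbove_add {k : ℕ}
    (U : Matrix l (Fin (k + 1)) R) (V : Matrix m (Fin (k + 1)) R) (d : Fin (k + 1) → R)
    (i : Fin (k + 1)) :
    U * diagonal d * Vᵀ
      = U.submatrix id i.succAbove * diagonal (fun j => d (i.succAbove j))
          * (V.submatrix id i.succAbove)ᵀ
        + d i • vecMulVec (fun r => U r i) (fun c => V c i) := by
  ext r c
  simp only [add_apply, smul_apply, vecMulVec_apply, mul_apply, transpose_apply,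
    diagonal_apply, submatrix_apply, id_eq, smul_eq_mul, mul_ite, mul_zero,
    Finset.sum_ite_eq', Finset.mem_univ, if_true]
  rw [Fin.sum_univ_succAbove _ i]
  ring

variable [Fintype m] [Fintype n]

theorem trace_transpose_mul_mul_sub_smul_vecMulVec {M : Matrix n n R} (hM : M.IsSymm)
    (E : Matrix n m R) (a : R) (u : n → R) (v : m → R) :
    ((E - a • vecMulVec u v)ᵀ * M * (E - a • vecMulVec u v)).trace
      = (Eᵀ * M * E).trace - 2 * a * (u ⬝ᵥ M *ᵥ E *ᵥ v)
        + a ^ 2 * (v ⬝ᵥ v) * (u ⬝ᵥ M *ᵥ u) := by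
  have hcross : (Eᵀ * M * vecMulVec u v).trace = u ⬝ᵥ M *ᵥ E *ᵥ v := by
    rw [mul_vecMulVec, trace_vecMulVec, ← mulVec_mulVec, dotProduct_comm,
      dotProduct_transpose_mulVec, dotProduct_mulVec u, ← mulVec_transpose, hM.eq]
  have hcross' : ((vecMulVec u v)ᵀ * M * E).trace = (Eᵀ * M * vecMulVec u v).trace := by
    rw [← trace_transpose, transpose_mul, transpose_mul, transpose_transpose, hM.eq,
      Matrix.mul_assoc]
  have hquad : ((vecMulVec u v)ᵀ * M * vecMulVec u v).trace = (v ⬝ᵥ v) * (u ⬝ᵥ M *ᵥ u) := by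
    rw [transpose_vecMulVec, Matrix.mul_assoc, mul_vecMulVec, vecMulVec_mul_vecMulVec,
      trace_vecMulVec, dotProduct_smul, smul_eq_mul, mul_comm]
  simp only [transpose_sub, transpose_smul, Matrix.sub_mul, Matrix.mul_sub, Matrix.smul_mul,
    Matrix.mul_smul, trace_sub, trace_smul, smul_eq_mul, hcross', hcross, hquad]
  ring

theorem dotProduct_mulVec_sub_two_mul_eq_of_mulVec_eq {S : Matrix n n R} (hS : S.IsSymm)
    {x b : n → R} (hx : S *ᵥ x = b) (w : n → R) :
    w ⬝ᵥ S *ᵥ w - 2 * (b ⬝ᵥ w) = (w - x) ⬝ᵥ S *ᵥ (w - x) - x ⬝ᵥ b := by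
  have hsymm : x ⬝ᵥ S *ᵥ w = b ⬝ᵥ w := by
    rw [dotProduct_mulVec, ← mulVec_transpose, hS.eq, hx]
  rw [mulVec_sub, hx, dotProduct_sub, sub_dotProduct, sub_dotProduct, hsymm, dotProduct_comm w b]
  ring

theorem PosDef.transpose_mul_mul_of_transpose_mul_self_eq_one [DecidableEq m]
    {M : Matrix n n ℝ} (hM : M.PosDef) {N : Matrix n m ℝ} (hN : Nᵀ * N = 1) :
    (Nᵀ * M * N).PosDef := by
  have hinj : Function.Injective N.mulVec :=
    Function.LeftInverse.injective (g := Nᵀ.mulVec) fun x => by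
      rw [mulVec_mulVec, hN, one_mulVec]
  simpa [conjTranspose_eq_transpose_of_trivial] using hM.conjTranspose_mul_mul_same hinj

end Matrix

theorem stmt_14_general {n m k : ℕ} (Z : Matrix (Fin n) (Fin m) ℝ)
    (U : Matrix (Fin n) (Fin (k + 1)) ℝ) (V : Matrix (Fin m) (Fin (k + 1)) ℝ)
    (d : Fin (k + 1) → ℝ) (Sig Ω : Matrix (Fin n) (Fin n) ℝ)
    (hSig : Sig.PosDef) (hΩ : Ω.PosDef) (i : Fin (k + 1))
    (N : Matrix (Fin n) (Fin (n - k + 1)) ℝ) (hN : Nᵀ * N = 1)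
    (ut : Fin (n - k + 1) → ℝ) (hui : (fun r => U r i) = N *ᵥ ut)
    (hvi : (fun c => V c i) ⬝ᵥ (fun c => V c i) = 1)
    (E : Matrix (Fin n) (Fin m) ℝ)
    (hE : E = Z - U.submatrix id i.succAbove
        * Matrix.diagonal (fun j => d (i.succAbove j)) * (V.submatrix id i.succAbove)ᵀ)
    (S : Matrix (Fin (n - k + 1)) (Fin (n - k + 1)) ℝ)
    (hS : S = d i ^ 2 • (Nᵀ * Ω * N)⁻¹ + d i ^ 2 • (Nᵀ * Sig⁻¹ * N))
    (mv : Fin (n - k + 1) → ℝ)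
    (hm : mv = d i • (Nᵀ *ᵥ (Sig⁻¹ *ᵥ (E *ᵥ fun c => V c i)))) :
    (-(1 / 2 : ℝ)
          * ((Z - U * Matrix.diagonal d * Vᵀ)ᵀ * Sig⁻¹
              * (Z - U * Matrix.diagonal d * Vᵀ)).trace
        - (1 / 2 : ℝ) * (d i ^ 2 * (ut ⬝ᵥ ((Nᵀ * Ω * N)⁻¹ *ᵥ ut)))
      = -(1 / 2 : ℝ) * ((ut ⬝ᵥ (S *ᵥ ut)) - 2 * (mv ⬝ᵥ ut))
        - (1 / 2 : ℝ) * (Eᵀ * Sig⁻¹ * E).trace) ∧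
    ∃ c : ℝ, 0 < c ∧ ∀ w : Fin (n - k + 1) → ℝ, w ⬝ᵥ w = 1 →
      Real.exp (-(1 / 2 : ℝ) * ((w ⬝ᵥ (S *ᵥ w)) - 2 * (mv ⬝ᵥ w)))
        = c * Real.exp (-(1 / 2 : ℝ)
            * ((w - S⁻¹ *ᵥ mv) ⬝ᵥ (S *ᵥ (w - S⁻¹ *ᵥ mv)))) := by
  have hP : ((Nᵀ * Ω * N)⁻¹ + Nᵀ * Sig⁻¹ * N).PosDef :=
    (hΩ.transpose_mul_mul_of_transpose_mul_self_eq_one hN).inv.add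
      (hSig.inv.transpose_mul_mul_of_transpose_mul_self_eq_one hN)
  have hS_symm : S.IsSymm := by
    rw [hS, ← smul_add]; exact (isHermitian_iff_isSymm.mp hP.1).smul _
  have hS_solve : S *ᵥ (S⁻¹ *ᵥ mv) = mv := by
    rcases eq_or_ne (d i) 0 with hd | hd
    -- here `S = 0` and `S⁻¹` is junk, but `mv = 0` as well
    · simp [hm, hd]
    · have hS_pos : S.PosDef := by rw [hS, ← smul_add]; exact hP.smul (by positivity)
      rw [mulVec_mulVec, mul_nonsing_inv S ((isUnit_iff_isUnit_det S).mp hS_pos.isUnit),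
        one_mulVec]
  refine ⟨?_, Real.exp (1 / 2 * ((S⁻¹ *ᵥ mv) ⬝ᵥ mv)), Real.exp_pos _, fun w _ => ?_⟩
  · have hsplit : Z - U * diagonal d * Vᵀ
        = E - d i • vecMulVec (fun r => U r i) (fun c => V c i) := by
      rw [hE, mul_diagonal_mul_transpose_eq_succAbove_add]; abel
    have hN_adj : ∀ y, (N *ᵥ ut) ⬝ᵥ y = ut ⬝ᵥ Nᵀ *ᵥ y := fun y => by
      rw [dotProduct_transpose_mulVec, dotProduct_comm]
    rw [hsplit, trace_transpose_mul_mul_sub_smul_vecMulVec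
      (isHermitian_iff_isSymm.mp hSig.inv.1), hvi, hui, hN_adj, hN_adj, hS, hm]
    simp only [add_mulVec, smul_mulVec, ← mulVec_mulVec, dotProduct_add, dotProduct_smul,
      smul_eq_mul, dotProduct_comm _ ut]
    ring
  · rw [dotProduct_mulVec_sub_two_mul_eq_of_mulVec_eq hS_symm hS_solve, ← Real.exp_add]
    ring_nf

/-- With `Z` `n×m`, `U, V, D = diag(d)`, `Σ` symmetric positive definite,
`E = Z − U_{−i} D_{−i} V_{−i}'`, `v_i'v_i = 1`, `u_i = Nũ` for an `n×(n−k+1)` matrix `N` with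
`N'N = I` and `ũ ∈ ℝ^{n−k+1}`, and `Ω` symmetric positive definite with `N'ΩN` invertible:
the sum of the negative log-likelihood exponent and the prior exponent is an exact quadratic
form in `ũ`,
`−½ tr[(Z − UDV')'Σ⁻¹(Z − UDV')] − ½ d_i² ũ'(N'ΩN)⁻¹ũ
  = −½ (ũ'Sũ − 2 m'ũ) − ½ tr[E'Σ⁻¹E]`,
with `S = d_i²(N'ΩN)⁻¹ + d_i² N'Σ⁻¹N` and `m = d_i N'Σ⁻¹E v_i`; hence on the unit sphere the
full conditional density of `ũ` is proportional to the Gaussian kernel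
`exp{−½ (ũ − S⁻¹m)'S(ũ − S⁻¹m)}`. (Columns are indexed by `Fin (k+1)`; deleting the `i`-th
column is `submatrix id i.succAbove`.) -/
theorem stmt_14 {n m k : ℕ} (Z : Matrix (Fin n) (Fin m) ℝ)
    (U : Matrix (Fin n) (Fin (k + 1)) ℝ) (V : Matrix (Fin m) (Fin (k + 1)) ℝ)
    (d : Fin (k + 1) → ℝ) (Sig Ω : Matrix (Fin n) (Fin n) ℝ)
    (hSig : Sig.PosDef) (hΩ : Ω.PosDef) (i : Fin (k + 1))
    (N : Matrix (Fin n) (Fin (n - k + 1)) ℝ) (hN : Nᵀ * N = 1)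
    (hNΩ : IsUnit (Nᵀ * Ω * N).det)
    (ut : Fin (n - k + 1) → ℝ) (hui : (fun r => U r i) = N *ᵥ ut)
    (hvi : (fun c => V c i) ⬝ᵥ (fun c => V c i) = 1)
    (E : Matrix (Fin n) (Fin m) ℝ)
    (hE : E = Z - U.submatrix id i.succAbove
        * Matrix.diagonal (fun j => d (i.succAbove j)) * (V.submatrix id i.succAbove)ᵀ)
    (S : Matrix (Fin (n - k + 1)) (Fin (n - k + 1)) ℝ)
    (hS : S = d i ^ 2 • (Nᵀ * Ω * N)⁻¹ + d i ^ 2 • (Nᵀ * Sig⁻¹ * N))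
    (mv : Fin (n - k + 1) → ℝ)
    (hm : mv = d i • (Nᵀ *ᵥ (Sig⁻¹ *ᵥ (E *ᵥ fun c => V c i)))) :
    (-(1 / 2 : ℝ)
          * ((Z - U * Matrix.diagonal d * Vᵀ)ᵀ * Sig⁻¹
              * (Z - U * Matrix.diagonal d * Vᵀ)).trace
        - (1 / 2 : ℝ) * (d i ^ 2 * (ut ⬝ᵥ ((Nᵀ * Ω * N)⁻¹ *ᵥ ut)))
      = -(1 / 2 : ℝ) * ((ut ⬝ᵥ (S *ᵥ ut)) - 2 * (mv ⬝ᵥ ut))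
        - (1 / 2 : ℝ) * (Eᵀ * Sig⁻¹ * E).trace) ∧
    ∃ c : ℝ, 0 < c ∧ ∀ w : Fin (n - k + 1) → ℝ, w ⬝ᵥ w = 1 →
      Real.exp (-(1 / 2 : ℝ) * ((w ⬝ᵥ (S *ᵥ w)) - 2 * (mv ⬝ᵥ w)))
        = c * Real.exp (-(1 / 2 : ℝ)
            * ((w - S⁻¹ *ᵥ mv) ⬝ᵥ (S *ᵥ (w - S⁻¹ *ᵥ mv)))) :=
  stmt_14_general Z U V d Sig Ω hSig hΩ i N hN ut hui hvi E hE S hS mv hm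
end
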